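/- arXiv:1903.07203 — 2 statements merged into one kernel-verified Lean document; each statement's English description precedes it below -/
import Mathlib

section
/- Let M be an inverse monoid and H a closed inverse submonoid of M. Define the relation ρ_H on N(H) by a ρ_H c iff (Ha)^ω = (Hc)^ω. Then ρ_H is an equivalence relation on N(H), and it is a congruence: if a, b, c, d ∈ N(H) with (Ha)^ω = (Hc)^ω and (Hb)^ω = (Hd)^ω, then (H(a*b))^ω = (H(c*d))^ω. -/
/-- The natural partial order on an inverse monoid: `a ≤ b` iff `a = e * b`
for some idempotent `e`. -/
def NatLe {M : Type*} [Monoid M] (a b : M) : Prop :=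
  ∃ e : M, e * e = e ∧ a = e * b

/-- `H` is a closed inverse submonoid of `M` (with inversion map `inv`). -/
def IsClosedInvSubmonoid {M : Type*} [Monoid M] (inv : M → M) (H : Set M) : Prop :=
  (1 : M) ∈ H ∧ (∀ a ∈ H, ∀ b ∈ H, a * b ∈ H) ∧ (∀ a ∈ H, inv a ∈ H) ∧
    (∀ a ∈ H, ∀ b : M, NatLe a b → b ∈ H)

/-- The normalizer of `H` in `M`. -/
def Normalizer {M : Type*} [Monoid M] (inv : M → M) (H : Set M) : Set M :=
  {a : M | ∀ h ∈ H, a * h * inv a ∈ H ∧ inv a * h * a ∈ H}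


/-- The right ω-coset `(Hm)^ω`. -/
def ROmega {M : Type*} [Monoid M] (H : Set M) (m : M) : Set M :=
  {x : M | ∃ h ∈ H, NatLe (h * m) x}

/-- The left ω-coset `(mH)^ω`. -/
def LOmega {M : Type*} [Monoid M] (H : Set M) (m : M) : Set M :=
  {x : M | ∃ h ∈ H, NatLe (m * h) x}


set_option linter.unusedSectionVars false

lemma assoc_tail {M : Type*} [Monoid M] {A B : M} (h : A = B) : ∀ q : M, A * q = B * q :=
  fun q => by rw [h]

section Aux
variable {M : Type*} [Monoid M] (inv : M → M)
  (hinv : ∀ a : M, a * inv a * a = a ∧ inv a * a * inv a = inv a)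
  (huniq : ∀ a b : M, a * b * a = a → b * a * b = b → b = inv a)

include hinv huniq

lemma inv_of_idem (e : M) (he : e * e = e) : inv e = e :=
  (huniq e e (by rw [he, he]) (by rw [he, he])).symm

lemma idem_inv_mul (a : M) : (inv a * a) * (inv a * a) = inv a * a := by
  simp only [mul_assoc]
  rw [← mul_assoc a, (hinv a).1]

lemma idem_mul_inv (a : M) : (a * inv a) * (a * inv a) = a * inv a := by
  simp only [mul_assoc]
  rw [← mul_assoc (inv a), (hinv a).2]

lemma idem_comm (e f : M) (he : e * e = e) (hf : f * f = f) : e * f = f * e := by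
  have key : ∀ u v : M, u * u = u → v * v = v → (u * v) * (u * v) = u * v := by
    intro u v hu hv
    have hu' : ∀ q : M, u * (u * q) = u * q := fun q => by
      simpa only [mul_assoc] using assoc_tail hu q
    have hv' : ∀ q : M, v * (v * q) = v * q := fun q => by
      simpa only [mul_assoc] using assoc_tail hv q
    set x := inv (u * v) with hxdef
    have h1 : (u * v) * x * (u * v) = u * v := (hinv _).1
    have h2 : x * (u * v) * x = x := (hinv _).2
    have h2' : ∀ q : M, x * (u * (v * (x * q))) = x * q := fun q => by
      simpa only [mul_assoc] using assoc_tail h2 q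
    have hfxe : v * x * u = x := by
      refine huniq (u * v) (v * x * u) ?_ ?_
      · simp only [mul_assoc] at h1 ⊢
        simp only [hu', hv']
        exact h1
      · simp only [mul_assoc, hu', hv', h2']
    have hx : x * x = x := by
      rw [← hfxe]
      simp only [mul_assoc, h2']
    have hxe : u * v = x := (huniq x (u * v) (by rw [h2]) (by rw [h1])).trans
      (inv_of_idem inv hinv huniq x hx)
    rw [hxe]; exact hx
  have he' : ∀ q : M, e * (e * q) = e * q := fun q => by
    simpa only [mul_assoc] using assoc_tail he q
  have hf' : ∀ q : M, f * (f * q) = f * q := fun q => by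
    simpa only [mul_assoc] using assoc_tail hf q
  have hef : (e * f) * (e * f) = e * f := key e f he hf
  have hfe : (f * e) * (f * e) = f * e := key f e hf he
  have h1 : (e * f) * (f * e) * (e * f) = e * f := by
    simp only [mul_assoc] at hef ⊢
    simp only [he', hf']
    exact hef
  have h2 : (f * e) * (e * f) * (f * e) = f * e := by
    simp only [mul_assoc] at hfe ⊢
    simp only [he', hf']
    exact hfe
  have := huniq (e * f) (f * e) h1 h2
  rw [this, inv_of_idem inv hinv huniq _ hef]

lemma inv_mul_rev (a b : M) : inv (a * b) = inv b * inv a := by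
  have hcomm := idem_comm inv hinv huniq (b * inv b) (inv a * a)
    (idem_mul_inv inv hinv huniq b) (idem_inv_mul inv hinv huniq a)
  refine (huniq (a * b) (inv b * inv a) ?_ ?_).symm
  · calc a * b * (inv b * inv a) * (a * b)
        = a * ((b * inv b) * (inv a * a)) * b := by simp only [mul_assoc]
      _ = a * ((inv a * a) * (b * inv b)) * b := by rw [hcomm]
      _ = (a * inv a * a) * (b * inv b * b) := by simp only [mul_assoc]
      _ = a * b := by rw [(hinv a).1, (hinv b).1]
  · calc inv b * inv a * (a * b) * (inv b * inv a)
        = inv b * ((inv a * a) * (b * inv b)) * inv a := by simp only [mul_assoc]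
      _ = inv b * ((b * inv b) * (inv a * a)) * inv a := by rw [← hcomm]
      _ = (inv b * b * inv b) * (inv a * a * inv a) := by simp only [mul_assoc]
      _ = inv b * inv a := by rw [(hinv a).2, (hinv b).2]

/-- Inserting an idempotent in the middle gives a smaller element. -/
lemma natle_mid (x e y : M) (he : e * e = e) : NatLe (x * e * y) (x * y) := by
  have hcomm := idem_comm inv hinv huniq e (inv x * x) he (idem_inv_mul inv hinv huniq x)
  refine ⟨x * e * inv x, ?_, ?_⟩
  · calc (x * e * inv x) * (x * e * inv x)
        = x * (e * (inv x * x)) * (e * inv x) := by simp only [mul_assoc]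
      _ = x * ((inv x * x) * e) * (e * inv x) := by rw [hcomm]
      _ = (x * inv x * x) * ((e * e) * inv x) := by simp only [mul_assoc]
      _ = x * e * inv x := by rw [(hinv x).1, he, ← mul_assoc]
  · calc x * e * y = (x * inv x * x) * e * y := by rw [(hinv x).1]
      _ = x * ((inv x * x) * e) * y := by simp only [mul_assoc]
      _ = x * (e * (inv x * x)) * y := by rw [← hcomm]
      _ = (x * e * inv x) * (x * y) := by simp only [mul_assoc]

lemma natle_trans {a b c : M} (h1 : NatLe a b) (h2 : NatLe b c) : NatLe a c := by
  obtain ⟨e, he, rfl⟩ := h1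
  obtain ⟨f, hf, rfl⟩ := h2
  have hcomm := idem_comm inv hinv huniq e f he hf
  refine ⟨e * f, ?_, (mul_assoc e f c).symm⟩
  calc e * f * (e * f) = e * (f * e) * f := by simp only [mul_assoc]
    _ = (e * e) * (f * f) := by rw [← hcomm]; simp only [mul_assoc]
    _ = e * f := by rw [he, hf]

end Aux
section Main
variable {M : Type*} [Monoid M] (inv : M → M)
  (hinv : ∀ a : M, a * inv a * a = a ∧ inv a * a * inv a = inv a)
  (huniq : ∀ a b : M, a * b * a = a → b * a * b = b → b = inv a)
  (H : Set M) (hH : IsClosedInvSubmonoid inv H)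

include hinv huniq hH

lemma romega_eq (m : M) (hm : m * inv m ∈ H) :
    ROmega H m = {x : M | x * inv m ∈ H} := by
  obtain ⟨h1H, hmulH, hinvH, hupH⟩ := hH
  ext x
  constructor
  · rintro ⟨h, hh, e, he, heq⟩
    refine hupH _ (hmulH h hh _ hm) _ ⟨e, he, ?_⟩
    calc h * (m * inv m) = (h * m) * inv m := by rw [mul_assoc]
      _ = e * x * inv m := by rw [heq]
      _ = e * (x * inv m) := by rw [mul_assoc]
  · intro hx
    refine ⟨x * inv m, hx, ?_⟩
    have := natle_mid inv hinv huniq x (inv m * m) 1 (idem_inv_mul inv hinv huniq m)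
    simpa only [mul_one, mul_assoc] using this

lemma mem_romega_self (m : M) : m ∈ ROmega H m :=
  ⟨1, hH.1, 1, by rw [one_mul], rfl⟩

end Main

/-- The relation `a ρ_H c` iff `(Ha)^ω = (Hc)^ω` is an equivalence relation on the
normalizer of `H`, and it is a congruence with respect to multiplication. -/
theorem rho_equivalence_and_congruence {M : Type*} [Monoid M] (inv : M → M)
    (hinv : ∀ a : M, a * inv a * a = a ∧ inv a * a * inv a = inv a)
    (huniq : ∀ a b : M, a * b * a = a → b * a * b = b → b = inv a)
    (H : Set M) (hH : IsClosedInvSubmonoid inv H) :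
    (∀ a ∈ Normalizer inv H, ROmega H a = ROmega H a) ∧
      (∀ a ∈ Normalizer inv H, ∀ c ∈ Normalizer inv H,
        ROmega H a = ROmega H c → ROmega H c = ROmega H a) ∧
      (∀ a ∈ Normalizer inv H, ∀ b ∈ Normalizer inv H, ∀ c ∈ Normalizer inv H,
        ROmega H a = ROmega H b → ROmega H b = ROmega H c → ROmega H a = ROmega H c) ∧
      (∀ a ∈ Normalizer inv H, ∀ b ∈ Normalizer inv H,
        ∀ c ∈ Normalizer inv H, ∀ d ∈ Normalizer inv H,
        ROmega H a = ROmega H c → ROmega H b = ROmega H d →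
          ROmega H (a * b) = ROmega H (c * d)) := by
  obtain ⟨h1H, hmulH, hinvH, hupH⟩ := hH
  have hH' : IsClosedInvSubmonoid inv H := ⟨h1H, hmulH, hinvH, hupH⟩
  refine ⟨fun a _ => rfl, fun a _ c _ h => h.symm,
    fun a _ b _ c _ h1 h2 => h1.trans h2, ?_⟩
  intro a ha b hb c hc d hd hac hbd
  -- aa⁻¹ ∈ H for every element of the normalizer
  have self_inv : ∀ m : M, m ∈ Normalizer inv H → m * inv m ∈ H := by
    intro m hm
    have := (hm 1 h1H).1
    rwa [mul_one] at this
  -- products of normalizer elements: (mn)(mn)⁻¹ ∈ H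
  have prod_inv : ∀ m n : M, m ∈ Normalizer inv H → n ∈ Normalizer inv H →
      (m * n) * inv (m * n) ∈ H := by
    intro m n hm hn
    have h1 : m * (n * inv n) * inv m ∈ H := (hm _ (self_inv n hn)).1
    rw [inv_mul_rev inv hinv huniq]
    simp only [mul_assoc] at h1 ⊢
    exact h1
  -- extract a c⁻¹ ∈ H etc. from coset equality
  have extract : ∀ m n : M, n ∈ Normalizer inv H → ROmega H m = ROmega H n →
      m * inv n ∈ H := by
    intro m n hn hmn
    have hmem : m ∈ ROmega H n := hmn ▸ mem_romega_self inv hinv huniq H hH' m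
    rwa [romega_eq inv hinv huniq H hH' n (self_inv n hn)] at hmem
  have hacH : a * inv c ∈ H := extract a c hc hac
  have hcaH : c * inv a ∈ H := extract c a ha hac.symm
  have hbdH : b * inv d ∈ H := extract b d hd hbd
  have hdbH : d * inv b ∈ H := extract d b hb hbd.symm
  -- key step
  have key : ∀ p q r s : M, p ∈ Normalizer inv H → q * inv s ∈ H → p * inv r ∈ H →
      ∀ x : M, x * (inv q * inv p) ∈ H → x * (inv s * inv r) ∈ H := by
    intro p q r s hp hqs hpr x hx
    have hmid : p * (q * inv s) * inv p ∈ H := (hp _ hqs).1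
    have hT : (x * (inv q * inv p)) * (p * (q * inv s) * inv p) * (p * inv r) ∈ H :=
      hmulH _ (hmulH _ hx _ hmid) _ hpr
    refine hupH _ hT _ ?_
    have s1 := natle_mid inv hinv huniq (x * (inv q * inv p) * (p * (q * inv s)))
      (inv p * p) (inv r) (idem_inv_mul inv hinv huniq p)
    have s2 := natle_mid inv hinv huniq (x * inv q) (inv p * p) (q * (inv s * inv r))
      (idem_inv_mul inv hinv huniq p)
    have s3 := natle_mid inv hinv huniq x (inv q * q) (inv s * inv r)
      (idem_inv_mul inv hinv huniq q)
    simp only [mul_assoc] at s1 s2 s3 ⊢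
    exact natle_trans inv hinv huniq s1 (natle_trans inv hinv huniq s2 s3)
  rw [romega_eq inv hinv huniq H hH' (a * b) (prod_inv a b ha hb),
    romega_eq inv hinv huniq H hH' (c * d) (prod_inv c d hc hd)]
  ext x
  simp only [Set.mem_setOf_eq, inv_mul_rev inv hinv huniq]
  exact ⟨key a b c d ha hbdH hacH x, key c d a b hc hdbH hcaH x⟩
end

section
/- Let M be an inverse monoid and H a closed inverse submonoid of M. Then the set of right ω-cosets {(Ha)^ω : a ∈ N(H)} is a group under the (well-defined) operation (Ha)^ω · (Hb)^ω = (H(a*b))^ω: the coset (H1)^ω = H is a two-sided identity, and for every a ∈ N(H) the coset (Ha⁻¹)^ω is a two-sided inverse of (Ha)^ω. Equivalently, the quotient of N(H) by the congruence ρ_H (where a ρ_H c iff (Ha)^ω = (Hc)^ω) is a group. -/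
section Aux

variable {M : Type*} [Monoid M] {inv : M → M}

lemma aux_inv_invol
    (hinv : ∀ a : M, a * inv a * a = a ∧ inv a * a * inv a = inv a)
    (huniq : ∀ a b : M, a * b * a = a → b * a * b = b → b = inv a)
    (a : M) : inv (inv a) = a :=
  (huniq (inv a) a (hinv a).2 (hinv a).1).symm

lemma aux_inv_idem
    (huniq : ∀ a b : M, a * b * a = a → b * a * b = b → b = inv a)
    {e : M} (he : e * e = e) : inv e = e :=
  (huniq e e (by rw [he, he]) (by rw [he, he])).symm

lemma aux_inv_one
    (huniq : ∀ a b : M, a * b * a = a → b * a * b = b → b = inv a) :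
    inv (1 : M) = 1 :=
  aux_inv_idem huniq (one_mul 1)

lemma aux_idem_mul
    (hinv : ∀ a : M, a * inv a * a = a ∧ inv a * a * inv a = inv a)
    (huniq : ∀ a b : M, a * b * a = a → b * a * b = b → b = inv a)
    {e f : M} (he : e * e = e) (hf : f * f = f) :
    (e * f) * (e * f) = e * f := by
  set x := inv (e * f) with hxdef
  have h1 : (e * f) * x * (e * f) = e * f := (hinv (e * f)).1
  have h2 : x * (e * f) * x = x := (hinv (e * f)).2
  have r2 : ∀ X : M, x * (e * (f * (x * X))) = x * X := fun X => by
    simpa only [mul_assoc] using congrArg (· * X) h2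
  have key1 : (e * f) * (f * x * e) * (e * f) = e * f := by
    calc (e * f) * (f * x * e) * (e * f)
        = e * (f * (f * (x * (e * (e * f))))) := by simp only [mul_assoc]
      _ = e * (f * (x * (e * f))) := by
          rw [← mul_assoc f f, hf, ← mul_assoc e e, he]
      _ = e * f := by simpa only [mul_assoc] using h1
  have key2 : (f * x * e) * (e * f) * (f * x * e) = f * x * e := by
    calc (f * x * e) * (e * f) * (f * x * e)
        = f * (x * (e * (e * (f * (f * (x * e)))))) := by simp only [mul_assoc]
      _ = f * (x * (e * (f * (x * e)))) := by
          rw [← mul_assoc e e, he, ← mul_assoc f f, hf]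
      _ = f * (x * e) := by rw [r2]
      _ = f * x * e := by rw [mul_assoc]
  have hxeq : f * x * e = x := huniq (e * f) (f * x * e) key1 key2
  have hxx : x * x = x := by
    conv_lhs => rw [← hxeq]
    calc (f * x * e) * (f * x * e)
        = f * (x * (e * (f * (x * e)))) := by simp only [mul_assoc]
      _ = f * (x * e) := by rw [r2]
      _ = f * x * e := by rw [mul_assoc]
      _ = x := hxeq
  have hef : e * f = x := by
    rw [← aux_inv_invol hinv huniq (e * f), ← hxdef, aux_inv_idem huniq hxx]
  rw [hef, hxx]

lemma aux_idem_comm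
    (hinv : ∀ a : M, a * inv a * a = a ∧ inv a * a * inv a = inv a)
    (huniq : ∀ a b : M, a * b * a = a → b * a * b = b → b = inv a)
    {e f : M} (he : e * e = e) (hf : f * f = f) :
    e * f = f * e := by
  have hef := aux_idem_mul hinv huniq he hf
  have hfe := aux_idem_mul hinv huniq hf he
  have k1 : (e * f) * (f * e) * (e * f) = e * f := by
    calc (e * f) * (f * e) * (e * f)
        = e * (f * (f * (e * (e * f)))) := by simp only [mul_assoc]
      _ = e * (f * (e * f)) := by
          rw [← mul_assoc f f, hf, ← mul_assoc e e, he]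
      _ = e * f := by simpa only [mul_assoc] using hef
  have k2 : (f * e) * (e * f) * (f * e) = f * e := by
    calc (f * e) * (e * f) * (f * e)
        = f * (e * (e * (f * (f * e)))) := by simp only [mul_assoc]
      _ = f * (e * (f * e)) := by
          rw [← mul_assoc e e, he, ← mul_assoc f f, hf]
      _ = f * e := by simpa only [mul_assoc] using hfe
  have := huniq (e * f) (f * e) k1 k2
  rw [this, aux_inv_idem huniq hef]

lemma aux_idem_inv_mul
    (hinv : ∀ a : M, a * inv a * a = a ∧ inv a * a * inv a = inv a)
    (a : M) : (inv a * a) * (inv a * a) = inv a * a := by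
  rw [← mul_assoc, (hinv a).2]

lemma aux_idem_mul_inv
    (hinv : ∀ a : M, a * inv a * a = a ∧ inv a * a * inv a = inv a)
    (a : M) : (a * inv a) * (a * inv a) = a * inv a := by
  rw [← mul_assoc, (hinv a).1]

lemma aux_conj_idem
    (hinv : ∀ a : M, a * inv a * a = a ∧ inv a * a * inv a = inv a)
    (huniq : ∀ a b : M, a * b * a = a → b * a * b = b → b = inv a)
    (a : M) {e : M} (he : e * e = e) :
    (a * e * inv a) * (a * e * inv a) = a * e * inv a := by
  have hcomm : e * (inv a * a) = (inv a * a) * e :=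
    aux_idem_comm hinv huniq he (aux_idem_inv_mul hinv a)
  calc (a * e * inv a) * (a * e * inv a)
      = a * (e * (inv a * a) * (e * inv a)) := by simp only [mul_assoc]
    _ = a * ((inv a * a) * e * (e * inv a)) := by rw [hcomm]
    _ = a * (inv a * (a * (e * (e * inv a)))) := by simp only [mul_assoc]
    _ = a * (inv a * (a * (e * inv a))) := by rw [← mul_assoc e e, he]
    _ = (a * inv a * a) * (e * inv a) := by simp only [mul_assoc]
    _ = a * e * inv a := by rw [(hinv a).1, mul_assoc]

lemma aux_mul_inv_rev
    (hinv : ∀ a : M, a * inv a * a = a ∧ inv a * a * inv a = inv a)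
    (huniq : ∀ a b : M, a * b * a = a → b * a * b = b → b = inv a)
    (a b : M) : inv (a * b) = inv b * inv a := by
  have hcomm : (b * inv b) * (inv a * a) = (inv a * a) * (b * inv b) :=
    aux_idem_comm hinv huniq (aux_idem_mul_inv hinv b) (aux_idem_inv_mul hinv a)
  have k1 : (a * b) * (inv b * inv a) * (a * b) = a * b := by
    calc (a * b) * (inv b * inv a) * (a * b)
        = a * ((b * inv b) * (inv a * a) * b) := by simp only [mul_assoc]
      _ = a * ((inv a * a) * (b * inv b) * b) := by rw [hcomm]
      _ = (a * inv a * a) * (b * inv b * b) := by simp only [mul_assoc]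
      _ = a * b := by rw [(hinv a).1, (hinv b).1]
  have k2 : (inv b * inv a) * (a * b) * (inv b * inv a) = inv b * inv a := by
    calc (inv b * inv a) * (a * b) * (inv b * inv a)
        = inv b * ((inv a * a) * (b * inv b) * inv a) := by simp only [mul_assoc]
      _ = inv b * ((b * inv b) * (inv a * a) * inv a) := by rw [← hcomm]
      _ = (inv b * b * inv b) * (inv a * a * inv a) := by simp only [mul_assoc]
      _ = inv b * inv a := by rw [(hinv b).2, (hinv a).2]
  exact (huniq (a * b) (inv b * inv a) k1 k2).symm

lemma aux_natle_refl (a : M) : NatLe a a :=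
  ⟨1, one_mul 1, (one_mul a).symm⟩

lemma aux_natle_trans
    (hinv : ∀ a : M, a * inv a * a = a ∧ inv a * a * inv a = inv a)
    (huniq : ∀ a b : M, a * b * a = a → b * a * b = b → b = inv a)
    {a b c : M} (h1 : NatLe a b) (h2 : NatLe b c) : NatLe a c := by
  obtain ⟨e, he, hab⟩ := h1
  obtain ⟨f, hf, hbc⟩ := h2
  exact ⟨e * f, aux_idem_mul hinv huniq he hf, by rw [hab, hbc, mul_assoc]⟩

lemma aux_natle_mul_right {a b : M} (c : M) (h : NatLe a b) :
    NatLe (a * c) (b * c) := by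
  obtain ⟨e, he, hab⟩ := h
  exact ⟨e, he, by rw [hab, mul_assoc]⟩

lemma aux_natle_mul_left
    (hinv : ∀ a : M, a * inv a * a = a ∧ inv a * a * inv a = inv a)
    (huniq : ∀ a b : M, a * b * a = a → b * a * b = b → b = inv a)
    (c : M) {a b : M} (h : NatLe a b) : NatLe (c * a) (c * b) := by
  obtain ⟨e, he, hab⟩ := h
  have hcomm : e * (inv c * c) = (inv c * c) * e :=
    aux_idem_comm hinv huniq he (aux_idem_inv_mul hinv c)
  have key : (c * e * inv c) * (c * b) = c * (e * b) := by
    calc (c * e * inv c) * (c * b)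
        = c * (e * (inv c * c) * b) := by simp only [mul_assoc]
      _ = c * ((inv c * c) * e * b) := by rw [hcomm]
      _ = (c * inv c * c) * (e * b) := by simp only [mul_assoc]
      _ = c * (e * b) := by rw [(hinv c).1]
  exact ⟨c * e * inv c, aux_conj_idem hinv huniq c he, by rw [hab, ← key]⟩

end Aux

section ROm

variable {M : Type*} [Monoid M] {inv : M → M} {H : Set M}

lemma aux_mem_self (h1 : (1 : M) ∈ H) (m : M) : m ∈ ROmega H m :=
  ⟨1, h1, by rw [one_mul]; exact aux_natle_refl m⟩

lemma aux_romega_subset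
    (hinv : ∀ a : M, a * inv a * a = a ∧ inv a * a * inv a = inv a)
    (huniq : ∀ a b : M, a * b * a = a → b * a * b = b → b = inv a)
    (hmul : ∀ a ∈ H, ∀ b ∈ H, a * b ∈ H)
    {m x : M} (hx : x ∈ ROmega H m) : ROmega H x ⊆ ROmega H m := by
  obtain ⟨h, hh, h1⟩ := hx
  rintro y ⟨k, hk, k1⟩
  refine ⟨k * h, hmul k hk h hh, ?_⟩
  have : NatLe (k * (h * m)) (k * x) := aux_natle_mul_left hinv huniq k h1
  rw [← mul_assoc] at this
  exact aux_natle_trans hinv huniq this k1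

lemma aux_romega_symm_mem
    (hinv : ∀ a : M, a * inv a * a = a ∧ inv a * a * inv a = inv a)
    (huniq : ∀ a b : M, a * b * a = a → b * a * b = b → b = inv a)
    (hH : IsClosedInvSubmonoid inv H)
    {m x : M} (hm : m * inv m ∈ H) (hx : x ∈ ROmega H m) : m ∈ ROmega H x := by
  obtain ⟨h, hh, f, hf, hxe⟩ := hx
  -- hxe : h * m = f * x
  have h1 : h * (m * inv m) ∈ H := hH.2.1 h hh _ hm
  have h2 : h * (m * inv m) = f * (x * inv m) := by
    rw [← mul_assoc, ← mul_assoc, ← hxe]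
  have h3 : x * inv m ∈ H := hH.2.2.2 _ h1 _ ⟨f, hf, h2⟩
  have h4 : m * inv x ∈ H := by
    have := hH.2.2.1 _ h3
    rwa [aux_mul_inv_rev hinv huniq x (inv m), aux_inv_invol hinv huniq m] at this
  refine ⟨m * inv x, h4, m * (inv x * x) * inv m,
    aux_conj_idem hinv huniq m (aux_idem_inv_mul hinv x), ?_⟩
  have hcomm : (inv x * x) * (inv m * m) = (inv m * m) * (inv x * x) :=
    aux_idem_comm hinv huniq (aux_idem_inv_mul hinv x) (aux_idem_inv_mul hinv m)
  have key : (m * (inv x * x) * inv m) * m = m * inv x * x := by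
    calc (m * (inv x * x) * inv m) * m
        = m * ((inv x * x) * (inv m * m)) := by simp only [mul_assoc]
      _ = m * ((inv m * m) * (inv x * x)) := by rw [hcomm]
      _ = (m * inv m * m) * (inv x * x) := by simp only [mul_assoc]
      _ = m * inv x * x := by rw [(hinv m).1, mul_assoc]
  exact key.symm

lemma aux_romega_eq_iff
    (hinv : ∀ a : M, a * inv a * a = a ∧ inv a * a * inv a = inv a)
    (huniq : ∀ a b : M, a * b * a = a → b * a * b = b → b = inv a)
    (hH : IsClosedInvSubmonoid inv H)
    {m x : M} (hm : m * inv m ∈ H) :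
    ROmega H m = ROmega H x ↔ x ∈ ROmega H m := by
  constructor
  · intro h; rw [h]; exact aux_mem_self hH.1 x
  · intro h
    apply Set.Subset.antisymm
    · exact aux_romega_subset hinv huniq hH.2.1
        (aux_romega_symm_mem hinv huniq hH hm h)
    · exact aux_romega_subset hinv huniq hH.2.1 h

end ROm

/-- The right ω-cosets of `H` by elements of the normalizer of `H` form a group under
`(Ha)^ω · (Hb)^ω = (H(a*b))^ω`: the operation is well defined on cosets and associative,
`(H1)^ω = H` is a two-sided identity and `(Ha⁻¹)^ω` is a two-sided inverse of `(Ha)^ω`. -/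
theorem omega_cosets_group {M : Type*} [Monoid M] (inv : M → M)
    (hinv : ∀ a : M, a * inv a * a = a ∧ inv a * a * inv a = inv a)
    (huniq : ∀ a b : M, a * b * a = a → b * a * b = b → b = inv a)
    (H : Set M) (hH : IsClosedInvSubmonoid inv H) :
    -- the operation on cosets is well defined
    (∀ a ∈ Normalizer inv H, ∀ b ∈ Normalizer inv H,
      ∀ c ∈ Normalizer inv H, ∀ d ∈ Normalizer inv H,
      ROmega H a = ROmega H c → ROmega H b = ROmega H d →
        ROmega H (a * b) = ROmega H (c * d)) ∧
    -- the normalizer is closed under the operations involved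
    ((1 : M) ∈ Normalizer inv H ∧
      (∀ a ∈ Normalizer inv H, ∀ b ∈ Normalizer inv H, a * b ∈ Normalizer inv H) ∧
      (∀ a ∈ Normalizer inv H, inv a ∈ Normalizer inv H)) ∧
    -- associativity on cosets
    (∀ a ∈ Normalizer inv H, ∀ b ∈ Normalizer inv H, ∀ c ∈ Normalizer inv H,
      ROmega H (a * b * c) = ROmega H (a * (b * c))) ∧
    -- (H1)^ω = H is a two-sided identity
    (ROmega H 1 = H ∧
      (∀ a ∈ Normalizer inv H, ROmega H (1 * a) = ROmega H a ∧
        ROmega H (a * 1) = ROmega H a)) ∧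
    -- (Ha⁻¹)^ω is a two-sided inverse of (Ha)^ω
    (∀ a ∈ Normalizer inv H, ROmega H (a * inv a) = ROmega H 1 ∧
      ROmega H (inv a * a) = ROmega H 1) := by
  have haainv : ∀ a ∈ Normalizer inv H, a * inv a ∈ H := fun a ha => by
    have := (ha 1 hH.1).1; rwa [mul_one] at this
  have hainva : ∀ a ∈ Normalizer inv H, inv a * a ∈ H := fun a ha => by
    have := (ha 1 hH.1).2; rwa [mul_one] at this
  have hN1 : (1 : M) ∈ Normalizer inv H := by
    refine fun h hh => ⟨?_, ?_⟩ <;> rw [aux_inv_one huniq] <;> simpa using hh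
  have hNmul : ∀ a ∈ Normalizer inv H, ∀ b ∈ Normalizer inv H,
      a * b ∈ Normalizer inv H := by
    intro a ha b hb h hh
    constructor
    · have h2 : a * (b * h * inv b) * inv a ∈ H := (ha _ (hb h hh).1).1
      have heq : a * b * h * inv (a * b) = a * (b * h * inv b) * inv a := by
        rw [aux_mul_inv_rev hinv huniq a b]; simp only [mul_assoc]
      rwa [heq]
    · have h2 : inv b * (inv a * h * a) * b ∈ H := (hb _ (ha h hh).2).2
      have heq : inv (a * b) * h * (a * b) = inv b * (inv a * h * a) * b := by
        rw [aux_mul_inv_rev hinv huniq a b]; simp only [mul_assoc]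
      rwa [heq]
  have hNinv : ∀ a ∈ Normalizer inv H, inv a ∈ Normalizer inv H := by
    intro a ha h hh
    constructor
    · rw [aux_inv_invol hinv huniq a]; exact (ha h hh).2
    · rw [aux_inv_invol hinv huniq a]; exact (ha h hh).1
  have step1 : ∀ (a c : M), ROmega H a = ROmega H c → ∀ b : M,
      (c * b) ∈ ROmega H (a * b) := by
    intro a c hac b
    have hc : c ∈ ROmega H a := by rw [hac]; exact aux_mem_self hH.1 c
    obtain ⟨h, hh, hle⟩ := hc
    refine ⟨h, hh, ?_⟩
    have := aux_natle_mul_right b hle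
    rwa [mul_assoc] at this
  have step2 : ∀ c ∈ Normalizer inv H, ∀ (b d : M),
      ROmega H b = ROmega H d → (c * d) ∈ ROmega H (c * b) := by
    intro c hc b d hbd
    have hd : d ∈ ROmega H b := by rw [hbd]; exact aux_mem_self hH.1 d
    obtain ⟨k, hk, hle⟩ := hd
    refine ⟨c * k * inv c, (hc k hk).1, ?_⟩
    have l1 : NatLe (c * (k * b)) (c * d) := aux_natle_mul_left hinv huniq c hle
    have l2 : NatLe ((inv c * c) * b) b :=
      ⟨inv c * c, aux_idem_inv_mul hinv c, rfl⟩
    have l4 : NatLe (c * (k * ((inv c * c) * b))) (c * (k * b)) :=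
      aux_natle_mul_left hinv huniq c (aux_natle_mul_left hinv huniq k l2)
    have l5 : c * (k * ((inv c * c) * b)) = (c * k * inv c) * (c * b) := by
      simp only [mul_assoc]
    rw [← l5]
    exact aux_natle_trans hinv huniq l4 l1
  have hR1 : ROmega H 1 = H := by
    ext x
    constructor
    · rintro ⟨h, hh, hle⟩
      rw [mul_one] at hle
      exact hH.2.2.2 h hh x hle
    · intro hx
      exact ⟨x, hx, by rw [mul_one]; exact aux_natle_refl x⟩
  have hHcoset : ∀ m ∈ H, ROmega H m = ROmega H 1 := by
    intro m hm
    have h1 : (1 : M) * inv 1 ∈ H := by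
      rw [aux_inv_one huniq, mul_one]; exact hH.1
    have hm1 : m ∈ ROmega H 1 := by rw [hR1]; exact hm
    exact ((aux_romega_eq_iff hinv huniq hH h1).2 hm1).symm
  refine ⟨?_, ⟨hN1, hNmul, hNinv⟩, ?_, ⟨hR1, fun a _ => ⟨by rw [one_mul], by rw [mul_one]⟩⟩,
    fun a ha => ⟨hHcoset _ (haainv a ha), hHcoset _ (hainva a ha)⟩⟩
  · intro a ha b hb c hc d hd hac hbd
    have e1 : ROmega H (a * b) = ROmega H (c * b) :=
      (aux_romega_eq_iff hinv huniq hH (haainv _ (hNmul a ha b hb))).2 (step1 a c hac b)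
    have e2 : ROmega H (c * b) = ROmega H (c * d) :=
      (aux_romega_eq_iff hinv huniq hH (haainv _ (hNmul c hc b hb))).2 (step2 c hc b d hbd)
    exact e1.trans e2
  · intro a _ b _ c _
    rw [mul_assoc]
end
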